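/- Let κ be an infinite cardinal and let T = {T_i : i < κ} be an indexed family of forests without isolated vertices, each with exactly κ components, each component of order at most κ. If G is a κ-regular connected graph, then G has a T-factorization: a family {G_i : i < κ} of pairwise edge-disjoint spanning subgraphs of G with G_i isomorphic to T_i for all i < κ and ∪_{i<κ} E(G_i) = E(G). -/

import Mathlib

open Cardinal

universe u

/-- `G` is `κ`-regular: every vertex has degree (neighbourhood cardinality) exactly `κ`. -/
def SimpleGraph.CardRegular {V : Type u} (G : SimpleGraph V) (κ : Cardinal.{u}) : Prop :=
  ∀ v : V, #(G.neighborSet v) = κ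

/-- `G` has no isolated vertices. -/
def SimpleGraph.NoIsolatedVerts {V : Type u} (G : SimpleGraph V) : Prop :=
  ∀ v : V, ∃ w : V, G.Adj v w

/-- A factorization of `G`: a family of spanning subgraphs, pairwise edge-disjoint,
whose edge sets cover `E(G)`. -/
def SimpleGraph.IsFactorization {V : Type u} {ι : Type u} (G : SimpleGraph V)
    (F : ι → SimpleGraph V) : Prop :=
  (∀ i, F i ≤ G) ∧ (Pairwise fun i j => Disjoint (F i).edgeSet (F j).edgeSet) ∧
    (⋃ i, (F i).edgeSet) = G.edgeSet

/-- In the forest `F` rooted at `v₀`, `u` is a child of `w`. -/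
def SimpleGraph.IsChild {V : Type u} (F : SimpleGraph V) (v₀ u w : V) : Prop :=
  F.Adj w u ∧ F.Reachable v₀ u ∧ F.dist v₀ u = F.dist v₀ w + 1

/-- The graph with edges `v_j v_i` for `v_i ∈ C j`, `j < i`. -/
def childGraph {V I : Type u} [LT I] (v : I ≃ V) (C : I → Set V) : SimpleGraph V :=
  SimpleGraph.fromEdgeSet {e | ∃ i j : I, j < i ∧ (v i : V) ∈ C j ∧ e = s(v j, v i)}

/-- Disjoint union of `ι`-many copies of `T`. -/
def copiesGraph (ι : Type u) {W : Type u} (T : SimpleGraph W) : SimpleGraph (ι × W) where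
  Adj p q := p.1 = q.1 ∧ T.Adj p.2 q.2
  symm := by constructor; rintro p q ⟨h1, h2⟩; exact ⟨h1.symm, h2.symm⟩
  loopless := by constructor; rintro p ⟨-, h⟩; exact T.loopless.irrefl _ h

/-!
The factorization is built by a transfinite recursion of length `κ` on sets of placements, a
placement putting a vertex of some forest `T i` at a vertex of `G`. The invariant: each forest is
mapped injectively and edge-preservingly, different forests use disjoint sets of edges, and the
placed part of each forest meets every tree in a subtree. The `κ` requirements (cover the edge `uv`
of `G`; put some vertex of `T i` at `v`; place the vertex `w` of `T i`) are met one at a time by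
finitely many new placements. This is possible because fewer than `κ` placements have been made
before each step, while there are `κ` forests, each with `κ` components, and every degree in `G` is
`κ`: an uncovered edge becomes the image of an edge of an untouched forest, `v` the image of a
vertex of an untouched component of `T i`, and `w` is reached along a path from the placed part of
its tree, each new vertex going to a fresh neighbour of the image of the previous one. Since the
placed part of a tree is a subtree, such a new vertex has exactly one placed neighbour, so it adds
exactly one edge, and that edge is fresh.
-/

open SimpleGraph Set

namespace ForestFactorization

section Cardinality

variable {κ : Cardinal.{u}}

theorem mk_iUnion_lt_of_finite {ι α : Type u} (hκ : ℵ₀ ≤ κ) (hι : #ι < κ) {f : ι → Set α}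
    (hf : ∀ i, (f i).Finite) : #(⋃ i, f i) < κ := by
  rcases finite_or_infinite ι with hfin | hinf
  · exact (finite_iUnion hf).lt_aleph0.trans_le hκ
  · calc #(⋃ i, f i) ≤ #ι * ⨆ i, #(f i) := mk_iUnion_le f
      _ ≤ #ι * ℵ₀ := mul_le_mul_right (ciSup_le' fun i => (hf i).lt_aleph0.le) _
      _ = #ι := mul_aleph0_eq (infinite_iff.1 hinf)
      _ < κ := hι

theorem mk_setOf_walk_length_le {V : Type u} {G : SimpleGraph V} (hκ : ℵ₀ ≤ κ)
    (hdeg : ∀ v, #(G.neighborSet v) ≤ κ) (v₀ : V) (n : ℕ) :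
    #{u | ∃ p : G.Walk u v₀, p.length = n} ≤ κ := by
  induction n with
  | zero =>
    have : {u | ∃ p : G.Walk u v₀, p.length = 0} ⊆ {v₀} := by
      rintro u ⟨p, hp⟩
      exact Walk.eq_of_length_eq_zero hp
    exact (mk_le_mk_of_subset this).trans (by simpa using one_le_aleph0.trans hκ)
  | succ n ih =>
    have : {u | ∃ p : G.Walk u v₀, p.length = n + 1} ⊆
        ⋃ x ∈ {u | ∃ p : G.Walk u v₀, p.length = n}, G.neighborSet x := by
      rintro u ⟨_ | ⟨h, q⟩, hq⟩
      · simp at hq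
      · exact mem_biUnion ⟨q, by simpa using hq⟩ h.symm
    calc _ ≤ _ := mk_le_mk_of_subset this
      _ ≤ _ := mk_biUnion_le _ _
      _ ≤ κ * κ := mul_le_mul' ih (ciSup_le' fun x => hdeg x)
      _ = κ := mul_eq_self hκ

theorem _root_.SimpleGraph.Connected.mk_le {V : Type u} {G : SimpleGraph V} (hG : G.Connected)
    (hκ : ℵ₀ ≤ κ) (hdeg : ∀ v, #(G.neighborSet v) ≤ κ) : #V ≤ κ := by
  obtain ⟨v₀⟩ := hG.nonempty
  let R : ℕ → Set V := fun n => {u | ∃ p : G.Walk u v₀, p.length = n}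
  have hR : (univ : Set V) ⊆ ⋃₀ range R := fun u _ =>
    let ⟨p⟩ := hG.preconnected u v₀
    ⟨R p.length, mem_range_self _, p, rfl⟩
  calc #V = #(univ : Set V) := mk_univ.symm
    _ ≤ #(⋃₀ range R) := mk_le_mk_of_subset hR
    _ ≤ #(range R) * ⨆ s : range R, #s := mk_sUnion_le _
    _ ≤ ℵ₀ * κ := by
      refine mul_le_mul' (countable_range R).le_aleph0 (ciSup_le' ?_)
      rintro ⟨_, n, rfl⟩
      exact mk_setOf_walk_length_le hκ hdeg v₀ n
    _ = κ := aleph0_mul_eq hκ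

theorem mk_le_of_connectedComponent {W : Type u} {H : SimpleGraph W} (hκ : ℵ₀ ≤ κ)
    (hc : #H.ConnectedComponent ≤ κ) (hsupp : ∀ c : H.ConnectedComponent, #c.supp ≤ κ) :
    #W ≤ κ := by
  rw [← mk_univ, ← H.iUnion_connectedComponentSupp]
  exact (mk_iUnion_le _).trans ((mul_le_mul' hc (ciSup_le' hsupp)).trans (mul_eq_self hκ).le)

end Cardinality

theorem _root_.Directed.exists_mem_mem_of_mem_iUnion {α : Type*} {ι : Sort*} {f : ι → Set α}
    (hf : Directed (· ⊆ ·) f) {a b : α} (ha : a ∈ ⋃ k, f k) (hb : b ∈ ⋃ k, f k) :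
    ∃ k, a ∈ f k ∧ b ∈ f k := by
  obtain ⟨k, hak⟩ := mem_iUnion.1 ha
  obtain ⟨l, hbl⟩ := mem_iUnion.1 hb
  obtain ⟨m, hkm, hlm⟩ := hf k l
  exact ⟨m, hkm hak, hlm hbl⟩

section FinitelyExtendable

variable {α : Type*} {Good Met : Set α → Prop} {S : Set α}

variable (Good Met) in
def FinitelyExtendable (S : Set α) : Prop :=
  ∃ X : Set α, X.Finite ∧ Good (S ∪ X) ∧ Met (S ∪ X)

theorem FinitelyExtendable.of_self (hG : Good S) (hM : Met S) : FinitelyExtendable Good Met S :=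
  ⟨∅, finite_empty, by rwa [union_empty], by rwa [union_empty]⟩

theorem FinitelyExtendable.of_insert {a : α} (h : FinitelyExtendable Good Met (insert a S)) :
    FinitelyExtendable Good Met S := by
  obtain ⟨X, hX, hG, hM⟩ := h
  refine ⟨insert a X, hX.insert a, ?_, ?_⟩ <;> rwa [union_insert, ← insert_union]

end FinitelyExtendable

section Transfinite

variable {α I R : Type u} [LinearOrder I] [WellFoundedLT I] (Good : Set α → Prop)
  (Met : R → Set α → Prop) (req : I → R)

/-- A finite set completing the union of the earlier increments to a good set meeting `req i`,
if there is one (otherwise a junk value of `Classical.epsilon`). -/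
noncomputable def increment : I → Set α :=
  wellFounded_lt.fix fun i X => Classical.epsilon fun Y : Set α =>
    Y.Finite ∧ Good ((⋃ j : Iio i, X j j.2) ∪ Y) ∧ Met (req i) ((⋃ j : Iio i, X j j.2) ∪ Y)

theorem increment_eq (i : I) : increment Good Met req i = Classical.epsilon fun Y : Set α =>
    Y.Finite ∧ Good ((⋃ j : Iio i, increment Good Met req j) ∪ Y) ∧
      Met (req i) ((⋃ j : Iio i, increment Good Met req j) ∪ Y) :=
  wellFounded_lt.fix_eq _ i

theorem exists_forall_met_of_finitelyExtendable {κ : Cardinal.{u}} (hκ : ℵ₀ ≤ κ)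
    (hI : ∀ i : I, #(Iio i) < κ)
    (hGood : ∀ (ι : Type u) (f : ι → Set α), Directed (· ⊆ ·) f → (∀ k, Good (f k)) →
      Good (⋃ k, f k))
    (hMet : ∀ r, Monotone (Met r))
    (hext : ∀ S, Good S → #S < κ → ∀ r, FinitelyExtendable Good (Met r) S) :
    ∃ S, Good S ∧ ∀ i, Met (req i) S := by
  set X := increment Good Met req
  let stage (i : I) : Set α := ⋃ j : Iic i, X j
  have stage_mono : Monotone stage := fun i i' h =>
    iUnion_mono' fun j => ⟨⟨j, (mem_Iic.1 j.2).trans h⟩, subset_rfl⟩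
  have stage_eq (i : I) : stage i = (⋃ j : Iio i, X j) ∪ X i := by
    ext x
    simp [stage, le_iff_lt_or_eq, or_and_right, exists_or]
  have before_eq (i : I) : (⋃ j : Iio i, X j) = ⋃ j : Iio i, stage j :=
    subset_antisymm (iUnion_mono fun j => subset_iUnion_of_subset ⟨j, self_mem_Iic⟩ subset_rfl)
      (iUnion_subset fun j => iUnion_subset fun k =>
        subset_iUnion_of_subset ⟨k, (mem_Iic.1 k.2).trans_lt j.2⟩ subset_rfl)
  have spec (i : I) : (X i).Finite ∧ Good (stage i) ∧ Met (req i) (stage i) := by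
    induction i using WellFoundedLT.induction with
    | _ i ih =>
      have hgood : Good (⋃ j : Iio i, X j) := by
        rw [before_eq]
        exact hGood _ _ (stage_mono.comp (Subtype.mono_coe _)).directed_le
          fun j => (ih j j.2).2.1
      have hsmall : #(⋃ j : Iio i, X j) < κ :=
        mk_iUnion_lt_of_finite hκ (hI i) fun j => (ih j j.2).1
      have := Classical.epsilon_spec (hext _ hgood hsmall (req i))
      rw [← increment_eq] at this
      rwa [stage_eq]
  exact ⟨⋃ i, stage i, hGood _ _ stage_mono.directed_le fun i => (spec i).2.1,
    fun i => hMet _ (subset_iUnion stage i) (spec i).2.2⟩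

end Transfinite

section PartialEmbedding

variable {W V : Type*} {H : SimpleGraph W} {G : SimpleGraph V}

/-- For a forest `H`: `D` meets every tree in a subtree. -/
def ComponentwiseConnected (H : SimpleGraph W) (D : Set W) : Prop :=
  ∀ x ∈ D, ∀ y ∈ D, H.Reachable x y → ∃ p : H.Walk x y, ∀ z ∈ p.support, z ∈ D

theorem componentwiseConnected_iUnion {ι : Sort*} {D : ι → Set W} (hD : Directed (· ⊆ ·) D)
    (h : ∀ a, ComponentwiseConnected H (D a)) : ComponentwiseConnected H (⋃ a, D a) := by
  intro x hx y hy hxy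
  obtain ⟨c, hxc, hyc⟩ := hD.exists_mem_mem_of_mem_iUnion hx hy
  obtain ⟨p, hp⟩ := h c x hxc y hyc hxy
  exact ⟨p, fun z hz => mem_iUnion.2 ⟨c, hp z hz⟩⟩

namespace ComponentwiseConnected

variable {D : Set W} {w : W}

theorem insert_of_not_reachable (hD : ComponentwiseConnected H D)
    (hw : ∀ x ∈ D, ¬ H.Reachable x w) : ComponentwiseConnected H (insert w D) := by
  simp only [ComponentwiseConnected, forall_mem_insert]
  refine ⟨⟨fun _ => ⟨.nil, by simp⟩, fun y hy hwy => (hw y hy hwy.symm).elim⟩,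
    fun x hx => ⟨fun hxw => (hw x hx hxw).elim, fun y hy hxy => ?_⟩⟩
  obtain ⟨p, hp⟩ := hD x hx y hy hxy
  exact ⟨p, fun z hz => mem_insert_of_mem w (hp z hz)⟩

theorem insert_of_adj (hD : ComponentwiseConnected H D) {w' : W} (hw' : w' ∈ D)
    (hadj : H.Adj w' w) : ComponentwiseConnected H (insert w D) := by
  have from_w : ∀ y ∈ D, H.Reachable w y →
      ∃ p : H.Walk w y, ∀ z ∈ p.support, z ∈ insert w D := by
    intro y hy hwy
    obtain ⟨p, hp⟩ := hD w' hw' y hy (hadj.reachable.trans hwy)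
    refine ⟨.cons hadj.symm p, fun z hz => ?_⟩
    rcases List.mem_cons.1 (Walk.support_cons _ _ ▸ hz) with rfl | hz
    · exact mem_insert z D
    · exact mem_insert_of_mem w (hp z hz)
  simp only [ComponentwiseConnected, forall_mem_insert]
  refine ⟨⟨fun _ => ⟨.nil, by simp⟩, from_w⟩, fun x hx => ⟨fun hxw => ?_, fun y hy hxy => ?_⟩⟩
  · obtain ⟨p, hp⟩ := from_w x hx hxw.symm
    exact ⟨p.reverse, fun z hz => hp z (by simpa using hz)⟩
  · obtain ⟨p, hp⟩ := hD x hx y hy hxy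
    exact ⟨p, fun z hz => mem_insert_of_mem w (hp z hz)⟩

/-- Two neighbours of `w` in `D` would close a cycle with a walk inside `D`. -/
theorem eq_of_adj_of_notMem (hD : ComponentwiseConnected H D) (hac : H.IsAcyclic)
    (hw : w ∉ D) {w₁ w₂ : W} (h₁ : w₁ ∈ D) (h₂ : w₂ ∈ D) (a₁ : H.Adj w w₁) (a₂ : H.Adj w w₂) :
    w₂ = w₁ := by
  classical
  obtain ⟨p, hp⟩ := hD w₁ h₁ w₂ h₂ (a₁.symm.reachable.trans a₂.reachable)
  have hwp : w ∉ p.bypass.support := fun h => hw (hp w (p.support_bypass_subset_support h))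
  simpa using hac.eq_snd_of_adj_start (p.bypass_isPath.cons (h := a₁) hwp) a₂ (by simp)

end ComponentwiseConnected

structure IsPartialEmbedding (H : SimpleGraph W) (G : SimpleGraph V) (P : Set (W × V)) :
    Prop where
  /-- `P` is the graph of an injective partial map `W → V`. -/
  fst_eq_iff : ∀ a ∈ P, ∀ b ∈ P, a.1 = b.1 ↔ a.2 = b.2
  adj : ∀ a ∈ P, ∀ b ∈ P, H.Adj a.1 b.1 → G.Adj a.2 b.2
  componentwiseConnected : ComponentwiseConnected H (Prod.fst '' P)

def edgeImage (H : SimpleGraph W) (P : Set (W × V)) : Set (Sym2 V) :=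
  {e | ∃ a ∈ P, ∃ b ∈ P, H.Adj a.1 b.1 ∧ s(a.2, b.2) = e}

theorem edgeImage_mono {P Q : Set (W × V)} (h : P ⊆ Q) : edgeImage H P ⊆ edgeImage H Q := by
  rintro e ⟨a, ha, b, hb, hab, rfl⟩
  exact ⟨a, h ha, b, h hb, hab, rfl⟩

theorem mem_image_snd_of_mk_mem_edgeImage {P : Set (W × V)} {u v : V}
    (h : s(u, v) ∈ edgeImage H P) : v ∈ Prod.snd '' P := by
  obtain ⟨a, ha, b, hb, -, hab⟩ := h
  rcases Sym2.eq_iff.1 hab with ⟨-, rfl⟩ | ⟨rfl, -⟩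
  · exact mem_image_of_mem _ hb
  · exact mem_image_of_mem _ ha

theorem edgeImage_iUnion_subset {ι : Sort*} {P : ι → Set (W × V)} (hP : Directed (· ⊆ ·) P) :
    edgeImage H (⋃ k, P k) ⊆ ⋃ k, edgeImage H (P k) := by
  rintro e ⟨a, ha, b, hb, hab, rfl⟩
  obtain ⟨k, hak, hbk⟩ := hP.exists_mem_mem_of_mem_iUnion ha hb
  exact mem_iUnion.2 ⟨k, a, hak, b, hbk, hab, rfl⟩

theorem edgeImage_insert_subset {P : Set (W × V)} {w : W} {y : V} {E : Set (Sym2 V)}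
    (hE : ∀ b ∈ P, H.Adj w b.1 → s(y, b.2) ∈ E) :
    edgeImage H (insert (w, y) P) ⊆ edgeImage H P ∪ E := by
  rintro e ⟨a, ha, b, hb, hab, rfl⟩
  rcases ha with rfl | ha <;> rcases hb with rfl | hb
  · exact (H.loopless.irrefl _ hab).elim
  · exact Or.inr (hE b hb hab)
  · exact Or.inr (Sym2.eq_swap ▸ hE a ha hab.symm)
  · exact Or.inl ⟨a, ha, b, hb, hab, rfl⟩

namespace IsPartialEmbedding

variable {P : Set (W × V)}

theorem iUnion {ι : Sort*} {P : ι → Set (W × V)} (hP : Directed (· ⊆ ·) P)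
    (h : ∀ k, IsPartialEmbedding H G (P k)) : IsPartialEmbedding H G (⋃ k, P k) := by
  refine ⟨fun a ha b hb => ?_, fun a ha b hb => ?_, ?_⟩
  · obtain ⟨k, hak, hbk⟩ := hP.exists_mem_mem_of_mem_iUnion ha hb
    exact (h k).fst_eq_iff a hak b hbk
  · obtain ⟨k, hak, hbk⟩ := hP.exists_mem_mem_of_mem_iUnion ha hb
    exact (h k).adj a hak b hbk
  · rw [image_iUnion]
    exact componentwiseConnected_iUnion
      (Directed.mono_comp (· ⊆ ·) (g := (Prod.fst '' ·)) (fun _ _ h => image_mono h) hP)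
      fun k => (h k).componentwiseConnected

theorem edgeImage_subset (hP : IsPartialEmbedding H G P) : edgeImage H P ⊆ G.edgeSet := by
  rintro e ⟨a, ha, b, hb, hab, rfl⟩
  exact hP.adj a ha b hb hab

theorem insert (hP : IsPartialEmbedding H G P) {w : W} {y : V} (hw : w ∉ Prod.fst '' P)
    (hy : y ∉ Prod.snd '' P) (hnbr : ∀ b ∈ P, H.Adj w b.1 → G.Adj y b.2)
    (hD : ComponentwiseConnected H (insert w (Prod.fst '' P))) :
    IsPartialEmbedding H G (insert (w, y) P) := by
  have fresh : ∀ b ∈ P, w ≠ b.1 ∧ y ≠ b.2 := fun b hb =>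
    ⟨fun h => hw ⟨b, hb, h.symm⟩, fun h => hy ⟨b, hb, h.symm⟩⟩
  refine ⟨?_, ?_, by rwa [image_insert_eq]⟩
  · simp only [forall_mem_insert]
    exact ⟨⟨trivial, fun b hb => iff_of_false (fresh b hb).1 (fresh b hb).2⟩,
      fun a ha => ⟨iff_of_false (fresh a ha).1.symm (fresh a ha).2.symm, hP.fst_eq_iff a ha⟩⟩
  · simp only [forall_mem_insert]
    exact ⟨⟨fun h => (H.loopless.irrefl _ h).elim, hnbr⟩,
      fun a ha => ⟨fun h => (hnbr a ha h.symm).symm, hP.adj a ha⟩⟩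

theorem eq_of_adj (hP : IsPartialEmbedding H G P) (hac : H.IsAcyclic) {w w' : W} {v' : V}
    (hw : w ∉ Prod.fst '' P) (hw' : (w', v') ∈ P) (hadj : H.Adj w' w) :
    ∀ b ∈ P, H.Adj w b.1 → b = (w', v') := by
  intro b hb hwb
  have hb1 : b.1 = w' := hP.componentwiseConnected.eq_of_adj_of_notMem hac hw
    (mem_image_of_mem _ hw') (mem_image_of_mem _ hb) hadj.symm hwb
  exact Prod.ext hb1 ((hP.fst_eq_iff b hb _ hw').1 hb1)

end IsPartialEmbedding

end PartialEmbedding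

section Packing

variable {I V : Type u} {W : I → Type u} {T : ∀ i, SimpleGraph (W i)} {G : SimpleGraph V}
  {S S' : Set (Σ i, W i × V)}

/-- A placement `⟨i, (w, v)⟩` puts vertex `w` of the `i`-th forest at vertex `v` of `G`. -/
def slice (S : Set (Σ i, W i × V)) (i : I) : Set (W i × V) := {p | ⟨i, p⟩ ∈ S}

theorem slice_mono (h : S ⊆ S') (i : I) : slice S i ⊆ slice S' i := fun _ hp => h hp

theorem slice_iUnion {ι : Sort*} (f : ι → Set (Σ i, W i × V)) (i : I) :
    slice (⋃ k, f k) i = ⋃ k, slice (f k) i := by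
  ext p; simp [slice]

theorem slice_insert_self (i : I) (p : W i × V) :
    slice (insert ⟨i, p⟩ S) i = insert p (slice S i) := by
  ext q; simp [slice, eq_comm]

theorem slice_insert_of_ne {i j : I} (p : W i × V) (h : j ≠ i) :
    slice (insert ⟨i, p⟩ S) j = slice S j := by
  ext q; simp [slice, h]

theorem mk_slice_le (i : I) : #(slice S i) ≤ #S :=
  mk_le_of_injective (f := fun p : slice S i => (⟨⟨i, p.1⟩, p.2⟩ : S)) fun a b h =>
    Subtype.ext (by simpa using congrArg Subtype.val h)

structure IsPacking (T : ∀ i, SimpleGraph (W i)) (G : SimpleGraph V) (S : Set (Σ i, W i × V)) :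
    Prop where
  isPartialEmbedding : ∀ i, IsPartialEmbedding (T i) G (slice S i)
  pairwise_disjoint : Pairwise fun i j =>
    Disjoint (edgeImage (T i) (slice S i)) (edgeImage (T j) (slice S j))

namespace IsPacking

theorem iUnion {ι : Sort*} {f : ι → Set (Σ i, W i × V)} (hf : Directed (· ⊆ ·) f)
    (h : ∀ k, IsPacking T G (f k)) : IsPacking T G (⋃ k, f k) := by
  have hslice (i : I) : Directed (· ⊆ ·) fun k => slice (f k) i :=
    Directed.mono_comp (· ⊆ ·) (g := (slice · i)) (fun _ _ h => slice_mono h i) hf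
  refine ⟨fun i => ?_, fun i j hij => ?_⟩
  · rw [slice_iUnion]
    exact IsPartialEmbedding.iUnion (hslice i) fun k => (h k).isPartialEmbedding i
  · dsimp only
    rw [slice_iUnion, slice_iUnion, Set.disjoint_left]
    intro e hei hej
    obtain ⟨k, hk⟩ := mem_iUnion.1 (edgeImage_iUnion_subset (hslice i) hei)
    obtain ⟨l, hl⟩ := mem_iUnion.1 (edgeImage_iUnion_subset (hslice j) hej)
    obtain ⟨m, hkm, hlm⟩ := hf k l
    exact Set.disjoint_left.1 ((h m).pairwise_disjoint hij)
      (edgeImage_mono (slice_mono hkm i) hk) (edgeImage_mono (slice_mono hlm j) hl)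

theorem insert_of_edgeImage_subset (hS : IsPacking T G S) {i : I} {p : W i × V} {E : Set (Sym2 V)}
    (hP : IsPartialEmbedding (T i) G (insert p (slice S i)))
    (hE : edgeImage (T i) (insert p (slice S i)) ⊆ edgeImage (T i) (slice S i) ∪ E)
    (hEj : ∀ j ≠ i, Disjoint E (edgeImage (T j) (slice S j))) :
    IsPacking T G (insert ⟨i, p⟩ S) := by
  have hdisj : ∀ j ≠ i, Disjoint (edgeImage (T i) (slice (insert ⟨i, p⟩ S) i))
      (edgeImage (T j) (slice (insert ⟨i, p⟩ S) j)) := by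
    intro j hj
    rw [slice_insert_self, slice_insert_of_ne p hj]
    exact disjoint_of_subset_left hE
      (disjoint_union_left.2 ⟨hS.pairwise_disjoint hj.symm, hEj j hj⟩)
  refine ⟨fun j => ?_, fun j k hjk => ?_⟩
  · by_cases hj : j = i
    · subst hj
      rwa [slice_insert_self]
    · rw [slice_insert_of_ne p hj]
      exact hS.isPartialEmbedding j
  · by_cases hj : j = i
    · subst hj
      exact hdisj k hjk.symm
    · by_cases hk : k = i
      · subst hk
        exact (hdisj j hj).symm
      · dsimp only
        rw [slice_insert_of_ne p hj, slice_insert_of_ne p hk]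
        exact hS.pairwise_disjoint hjk

theorem insert_of_not_reachable (hS : IsPacking T G S) {i : I} {w : W i} {y : V}
    (hw : ∀ x ∈ Prod.fst '' slice S i, ¬ (T i).Reachable x w)
    (hy : y ∉ Prod.snd '' slice S i) : IsPacking T G (insert ⟨i, (w, y)⟩ S) := by
  have hP := hS.isPartialEmbedding i
  have hnbr : ∀ b ∈ slice S i, ¬ (T i).Adj w b.1 := fun b hb h =>
    hw _ (mem_image_of_mem _ hb) h.symm.reachable
  exact hS.insert_of_edgeImage_subset (E := ∅)
    (hP.insert (fun h => hw w h (Reachable.refl _)) hy (fun b hb h => (hnbr b hb h).elim)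
      (hP.componentwiseConnected.insert_of_not_reachable hw))
    (edgeImage_insert_subset fun b hb h => (hnbr b hb h).elim)
    (fun _ _ => empty_disjoint _)

theorem insert_of_adj (hS : IsPacking T G S) {i : I} (hac : (T i).IsAcyclic) {w w' : W i}
    {v' y : V} (hw : w ∉ Prod.fst '' slice S i) (hw' : (w', v') ∈ slice S i)
    (hadj : (T i).Adj w' w) (hy : y ∉ Prod.snd '' slice S i) (hvy : G.Adj v' y)
    (he : ∀ j ≠ i, s(v', y) ∉ edgeImage (T j) (slice S j)) :
    IsPacking T G (insert ⟨i, (w, y)⟩ S) := by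
  have hP := hS.isPartialEmbedding i
  have huniq := hP.eq_of_adj hac hw hw' hadj
  refine hS.insert_of_edgeImage_subset (E := {s(v', y)})
    (hP.insert hw hy (fun b hb h => ?_) (hP.componentwiseConnected.insert_of_adj
      (mem_image_of_mem _ hw') hadj))
    (edgeImage_insert_subset fun b hb h => ?_) (fun j hj => disjoint_singleton_left.2 (he j hj))
  · rw [huniq b hb h]
    exact hvy.symm
  · rw [huniq b hb h]
    exact Sym2.eq_swap

end IsPacking

section Counting

variable {κ : Cardinal.{u}}

def hosts (S : Set (Σ i, W i × V)) : Set V := (fun p => p.2.2) '' S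

theorem image_snd_slice_subset_hosts (i : I) : Prod.snd '' slice S i ⊆ hosts S := by
  rintro _ ⟨p, hp, rfl⟩
  exact ⟨⟨i, p⟩, hp, rfl⟩

theorem exists_slice_eq_empty (hS : #S < κ) (hI : κ ≤ #I) : ∃ i, slice S i = ∅ := by
  obtain ⟨i, hi⟩ := compl_nonempty_of_mk_lt_mk
    ((mk_image_le (f := Sigma.fst) (s := S)).trans_lt (hS.trans_le hI))
  exact ⟨i, eq_empty_of_forall_notMem fun p hp => hi ⟨_, hp, rfl⟩⟩

theorem exists_notMem_hosts (hS : #S < κ) (hV : κ ≤ #V) : ∃ v, v ∉ hosts S :=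
  compl_nonempty_of_mk_lt_mk (mk_image_le.trans_lt (hS.trans_le hV))

theorem exists_adj_notMem_hosts (hS : #S < κ) {v : V} (hv : κ ≤ #(G.neighborSet v)) :
    ∃ y, G.Adj v y ∧ y ∉ hosts S :=
  sdiff_nonempty_of_mk_lt_mk (mk_image_le.trans_lt (hS.trans_le hv))

theorem exists_notMem_component (hS : #S < κ) {i : I}
    (hcomp : κ ≤ #(T i).ConnectedComponent) :
    ∃ t, ∀ x ∈ Prod.fst '' slice S i, ¬ (T i).Reachable x t := by
  obtain ⟨c, hc⟩ := compl_nonempty_of_mk_lt_mk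
    (S := (T i).connectedComponentMk '' (Prod.fst '' slice S i))
    (mk_image_le.trans_lt (mk_image_le.trans_lt ((mk_slice_le i).trans_lt (hS.trans_le hcomp))))
  induction c using ConnectedComponent.ind with
  | h t => exact ⟨t, fun x hx hxt => hc ⟨x, hx, ConnectedComponent.sound hxt⟩⟩

end Counting

end Packing

section Requirements

variable {I V : Type u} {W : I → Type u} {T : ∀ i, SimpleGraph (W i)} {G : SimpleGraph V}
  {S : Set (Σ i, W i × V)} {κ : Cardinal.{u}}

inductive Requirement (I : Type u) (W : I → Type u) (V : Type u) : Type u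
  | edge (u v : V)
  | cover (i : I) (v : V)
  | place (i : I) (w : W i)

variable (T G) in
def Requirement.IsMet : Requirement I W V → Set (Σ i, W i × V) → Prop
  | .edge u v, S => G.Adj u v → ∃ i, s(u, v) ∈ edgeImage (T i) (slice S i)
  | .cover i v, S => v ∈ Prod.snd '' slice S i
  | .place i w, S => w ∈ Prod.fst '' slice S i

theorem Requirement.isMet_mono (r : Requirement I W V) : Monotone (r.IsMet T G) := by
  intro S S' h
  cases r with
  | edge u v => exact fun hmet huv => (hmet huv).imp fun i => (edgeImage_mono (slice_mono h i) ·)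
  | cover i v => exact fun hmet => image_mono (slice_mono h i) hmet
  | place i w => exact fun hmet => image_mono (slice_mono h i) hmet

theorem mk_requirement_le (hκ : ℵ₀ ≤ κ) (hI : #I ≤ κ) (hV : #V ≤ κ) (hW : ∀ i, #(W i) ≤ κ) :
    #(Requirement I W V) ≤ κ := by
  let f : Requirement I W V → (V × V) ⊕ (I × V) ⊕ (Σ i, W i)
    | .edge u v => .inl (u, v)
    | .cover i v => .inr (.inl (i, v))
    | .place i w => .inr (.inr ⟨i, w⟩)
  have hf : Function.Injective f := by
    rintro (_ | _ | _) (_ | _ | _) h <;> simp_all [f]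
  calc #(Requirement I W V) ≤ #((V × V) ⊕ (I × V) ⊕ (Σ i, W i)) := mk_le_of_injective hf
    _ = #V * #V + (#I * #V + sum fun i => #(W i)) := by simp [mk_sigma]
    _ ≤ κ * κ + (κ * κ + #I * κ) := by
      gcongr
      exact (sum_le_sum _ _ hW).trans_eq (sum_const' _ _)
    _ ≤ κ * κ + (κ * κ + κ * κ) := by gcongr
    _ = κ := by simp only [mul_eq_self hκ, add_eq_self hκ]

theorem finitelyExtendable_place_of_walk (hκ : ℵ₀ ≤ κ) (hdeg : ∀ v, κ ≤ #(G.neighborSet v))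
    {i : I} (hac : (T i).IsAcyclic) {w t : W i} (p : (T i).Walk w t) :
    ∀ {S}, IsPacking T G S → #S < κ → w ∈ Prod.fst '' slice S i →
      FinitelyExtendable (IsPacking T G) ((Requirement.place i t).IsMet T G) S := by
  induction p with
  | nil => exact fun hS _ hw => .of_self hS hw
  | @cons w x t hadj q ih =>
    intro S hS hsmall hw
    by_cases hx : x ∈ Prod.fst '' slice S i
    · exact ih hS hsmall hx
    obtain ⟨⟨_, v⟩, hv, rfl⟩ := hw
    obtain ⟨y, hvy, hy⟩ := exists_adj_notMem_hosts hsmall (hdeg v)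
    have hS' := hS.insert_of_adj hac hx hv hadj (fun h => hy (image_snd_slice_subset_hosts i h))
      hvy fun j _ h => hy (image_snd_slice_subset_hosts j (mem_image_snd_of_mk_mem_edgeImage h))
    refine (ih hS' (mk_insert_le.trans_lt (add_one_lt_of_lt hκ hsmall)) ?_).of_insert
    exact ⟨(x, y), by simp [slice_insert_self], rfl⟩

theorem IsPacking.finitelyExtendable_edge (hI : κ ≤ #I) (hac : ∀ i, (T i).IsAcyclic)
    (hni : ∀ i, (T i).NoIsolatedVerts) (hcomp : ∀ i, κ ≤ #(T i).ConnectedComponent)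
    (hS : IsPacking T G S) (hsmall : #S < κ) (u v : V) :
    FinitelyExtendable (IsPacking T G) ((Requirement.edge u v).IsMet T G) S := by
  by_cases hmet : G.Adj u v → ∃ i, s(u, v) ∈ edgeImage (T i) (slice S i)
  · exact .of_self hS hmet
  obtain ⟨huv, hfree⟩ : G.Adj u v ∧ ∀ i, s(u, v) ∉ edgeImage (T i) (slice S i) := by
    simpa using hmet
  obtain ⟨i, hi⟩ := exists_slice_eq_empty hsmall hI
  obtain ⟨t, ht⟩ := exists_notMem_component hsmall (hcomp i)
  obtain ⟨t', htt'⟩ := hni i t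
  have hS₁ := hS.insert_of_not_reachable (y := u) ht (by simp [hi])
  have hS₂ := hS₁.insert_of_adj (hac i) (w := t') (y := v)
    (by simp [slice_insert_self, hi, htt'.ne']) (by simp [slice_insert_self]) htt'
    (by simp [slice_insert_self, hi, huv.ne']) huv
    fun j hj => by rw [slice_insert_of_ne _ hj]; exact hfree j
  refine (FinitelyExtendable.of_self hS₂ fun _ =>
    ⟨i, (t, u), ?_, (t', v), ?_, htt', rfl⟩).of_insert.of_insert <;> simp [slice_insert_self]

theorem IsPacking.finitelyExtendable_cover (hcomp : ∀ i, κ ≤ #(T i).ConnectedComponent)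
    (hS : IsPacking T G S) (hsmall : #S < κ) (i : I) (v : V) :
    FinitelyExtendable (IsPacking T G) ((Requirement.cover i v).IsMet T G) S := by
  by_cases hv : v ∈ Prod.snd '' slice S i
  · exact .of_self hS hv
  obtain ⟨t, ht⟩ := exists_notMem_component hsmall (hcomp i)
  exact (FinitelyExtendable.of_self (hS.insert_of_not_reachable ht hv)
    ⟨(t, v), by simp [slice_insert_self], rfl⟩).of_insert

theorem IsPacking.finitelyExtendable_place (hκ : ℵ₀ ≤ κ) (hV : κ ≤ #V)
    (hac : ∀ i, (T i).IsAcyclic) (hdeg : ∀ v, κ ≤ #(G.neighborSet v))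
    (hS : IsPacking T G S) (hsmall : #S < κ) (i : I) (t : W i) :
    FinitelyExtendable (IsPacking T G) ((Requirement.place i t).IsMet T G) S := by
  by_cases h : ∀ x ∈ Prod.fst '' slice S i, ¬ (T i).Reachable x t
  · obtain ⟨v, hv⟩ := exists_notMem_hosts hsmall hV
    exact (FinitelyExtendable.of_self (hS.insert_of_not_reachable h
      fun h' => hv (image_snd_slice_subset_hosts i h'))
      ⟨(t, v), by simp [slice_insert_self], rfl⟩).of_insert
  obtain ⟨x, hx, ⟨p⟩⟩ : ∃ x ∈ Prod.fst '' slice S i, (T i).Reachable x t := by simpa using h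
  exact finitelyExtendable_place_of_walk hκ hdeg (hac i) p hS hsmall hx

theorem IsPacking.finitelyExtendable (hκ : ℵ₀ ≤ κ) (hI : κ ≤ #I) (hV : κ ≤ #V)
    (hac : ∀ i, (T i).IsAcyclic) (hni : ∀ i, (T i).NoIsolatedVerts)
    (hcomp : ∀ i, κ ≤ #(T i).ConnectedComponent) (hdeg : ∀ v, κ ≤ #(G.neighborSet v))
    (hS : IsPacking T G S) (hsmall : #S < κ) :
    ∀ r : Requirement I W V, FinitelyExtendable (IsPacking T G) (r.IsMet T G) S
  | .edge u v => hS.finitelyExtendable_edge hI hac hni hcomp hsmall u v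
  | .cover i v => hS.finitelyExtendable_cover hcomp hsmall i v
  | .place i t => hS.finitelyExtendable_place hκ hV hac hdeg hsmall i t

end Requirements

section Assembly

variable {W V : Type*}

theorem exists_equiv_of_fst_eq_iff {P : Set (W × V)} (hP : ∀ a ∈ P, ∀ b ∈ P, a.1 = b.1 ↔ a.2 = b.2)
    (hfst : ∀ w, ∃ v, (w, v) ∈ P) (hsnd : ∀ v, ∃ w, (w, v) ∈ P) :
    ∃ e : W ≃ V, P = {p | e p.1 = p.2} := by
  choose f hf using hfst
  have hinj : Function.Injective f := fun a b h => (hP _ (hf a) _ (hf b)).2 h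
  have hsurj : Function.Surjective f := fun v =>
    let ⟨w, hw⟩ := hsnd v
    ⟨w, (hP _ (hf w) _ hw).1 rfl⟩
  refine ⟨Equiv.ofBijective f ⟨hinj, hsurj⟩, ext fun p => ⟨fun hp => (hP _ (hf p.1) _ hp).1 rfl,
    fun hp => ?_⟩⟩
  have := hf p.1
  rwa [show f p.1 = p.2 from hp] at this

theorem edgeImage_setOf_apply_eq (H : SimpleGraph W) (e : W ≃ V) :
    edgeImage H {p | e p.1 = p.2} = (H.map e).edgeSet := by
  ext x
  constructor
  · rintro ⟨a, ha, b, hb, hab, rfl⟩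
    rw [mem_edgeSet, map_adj', ← show e a.1 = a.2 from ha, ← show e b.1 = b.2 from hb]
    exact ⟨e.injective.ne hab.ne, a.1, b.1, hab, rfl, rfl⟩
  · induction x using Sym2.ind with
    | h u v =>
      rintro ⟨-, a, b, hab, rfl, rfl⟩
      exact ⟨(a, e a), rfl, (b, e b), rfl, hab, rfl⟩

theorem IsPacking.exists_factorization {I V : Type u} {W : I → Type u}
    {T : ∀ i, SimpleGraph (W i)} {G : SimpleGraph V} {S : Set (Σ i, W i × V)}
    (hS : IsPacking T G S) (hmet : ∀ r : Requirement I W V, r.IsMet T G S) :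
    ∃ F : I → SimpleGraph V, G.IsFactorization F ∧ ∀ i, Nonempty (F i ≃g T i) := by
  have hequiv (i : I) : ∃ e : W i ≃ V, slice S i = {p | e p.1 = p.2} := by
    refine exists_equiv_of_fst_eq_iff (hS.isPartialEmbedding i).fst_eq_iff (fun w => ?_) fun v => ?_
    · obtain ⟨⟨_, v⟩, hp, rfl⟩ := hmet (.place i w)
      exact ⟨v, hp⟩
    · obtain ⟨⟨w, _⟩, hp, rfl⟩ := hmet (.cover i v)
      exact ⟨w, hp⟩
  choose e he using hequiv
  have hedges (i : I) : ((T i).map (e i)).edgeSet = edgeImage (T i) (slice S i) := by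
    rw [he i, edgeImage_setOf_apply_eq]
  refine ⟨fun i => (T i).map (e i), ⟨fun i => ?_, fun i j hij => ?_, ?_⟩,
    fun i => ⟨(Iso.map (e i) (T i)).symm⟩⟩
  · rw [← edgeSet_subset_edgeSet, hedges]
    exact (hS.isPartialEmbedding i).edgeImage_subset
  · dsimp only
    rw [hedges, hedges]
    exact hS.pairwise_disjoint hij
  · refine subset_antisymm (iUnion_subset fun i => ?_) fun x hx => ?_
    · rw [hedges]
      exact (hS.isPartialEmbedding i).edgeImage_subset
    · induction x using Sym2.ind with
      | h u v =>
        obtain ⟨i, hi⟩ := hmet (.edge u v) hx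
        exact mem_iUnion.2 ⟨i, (hedges i).symm ▸ hi⟩

end Assembly

end ForestFactorization

/-- Main theorem: every connected `κ`-regular graph admits a `T`-factorization for every
family `T` of `κ` forests without isolated vertices, each with `κ` components of order
at most `κ`. -/
theorem stmt_5 (κ : Cardinal.{u}) (hκ : ℵ₀ ≤ κ)
    (W : κ.ord.ToType → Type u) (T : ∀ i, SimpleGraph (W i))
    (hac : ∀ i, (T i).IsAcyclic) (hni : ∀ i, (T i).NoIsolatedVerts)
    (hcomp : ∀ i, #((T i).ConnectedComponent) = κ)
    (hord : ∀ i (c : (T i).ConnectedComponent), #c.supp ≤ κ)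
    {V : Type u} (G : SimpleGraph V) (hconn : G.Connected) (hreg : G.CardRegular κ) :
    ∃ F : κ.ord.ToType → SimpleGraph V, G.IsFactorization F ∧
      ∀ i, Nonempty (F i ≃g T i) := by
  open ForestFactorization in
  obtain ⟨v₀⟩ := hconn.nonempty
  have hI : #κ.ord.ToType = κ := mk_ord_toType κ
  have hV : #V = κ := le_antisymm (hconn.mk_le hκ fun v => (hreg v).le)
    ((hreg v₀).symm.trans_le (mk_set_le _))
  have hW (i : κ.ord.ToType) : #(W i) ≤ κ :=
    mk_le_of_connectedComponent hκ (hcomp i).le (hord i)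
  obtain ⟨enum⟩ : #(Requirement κ.ord.ToType W V) ≤ #κ.ord.ToType :=
    (mk_requirement_le hκ hI.le hV.le hW).trans_eq hI.symm
  have : Nonempty (Requirement κ.ord.ToType W V) := ⟨.edge v₀ v₀⟩
  obtain ⟨S, hS, hmet⟩ := exists_forall_met_of_finitelyExtendable (IsPacking T G)
    (Requirement.IsMet T G) (Function.invFun enum) hκ (fun i => by simpa using mk_Iio_lt i)
    (fun _ _ => IsPacking.iUnion) Requirement.isMet_mono
    fun S hS hsmall => hS.finitelyExtendable hκ hI.ge hV.ge hac hni (fun i => (hcomp i).ge)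
      (fun v => (hreg v).ge) hsmall
  refine hS.exists_factorization fun r => ?_
  obtain ⟨α, rfl⟩ := Function.invFun_surjective enum.injective r
  exact hmet α
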